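/- arXiv:2008.04983 — 2 statements merged into one kernel-verified Lean document; each statement's English description precedes it below -/
import Mathlib

section
/- Let C be a finite set of finite words over a finite alphabet, and let (Xₙ)ₙ be a sequence of finite sets of finite words such that each word in Xₙ₊₁ is a concatenation x₁e₁x₂e₂⋯e_{m−1}x_m with xᵢ ∈ Xₙ and eᵢ ∈ C. Suppose that for every n there exists m such that every word in X_m contains every word of Xₙ as a subword. Then the subshift consisting of all bi-infinite sequences whose every finite subword occurs as a subword of some element of ⋃ₙ Xₙ is minimal. -/
/-- The finite segment `w(i) w(i+1) … w(i+m-1)` of a bi-infinite sequence. -/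
def seg {A : Type*} (u : ℤ → A) (i : ℤ) (m : ℕ) : List A :=
  (List.range m).map fun t => u (i + t)

/-- The subshift generated by a family of finite words: all bi-infinite
sequences each of whose finite subwords is a subword of some member word. -/
def genSubshift {A : Type*} (W : Set (List A)) : Set (ℤ → A) :=
  {u | ∀ (i : ℤ) (m : ℕ), ∃ x ∈ W, (seg u i m).IsInfix x}

/-- The shift orbit of a bi-infinite sequence. -/
def shiftOrbit {A : Type*} (x : ℤ → A) : Set (ℤ → A) :=
  Set.range fun n : ℤ => (fun k => x (k + n))

/-!
Unfolding the hierarchy, every word of a level `M ≥ m` is a concatenation of words of level `m`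
separated by connectors. As the words of the levels `≤ m` and the connectors have bounded length,
every long enough subword of a word of `⋃ₙ X n` contains a whole word of level `m`. Given a
subword `w` of `v`, choose `m` so that every word of level `m` contains a word of `⋃ₙ X n` that
contains `w`; a long segment of `u` then contains `w`, so `v` is a limit of shifts of `u`.
-/

open List Filter

section Seg

variable {A : Type*}

/-- In `seg` the cast `ℕ → ℤ` is elaborated as a monadic lift of the whole list `range m`. -/
lemma seg_eq_map (u : ℤ → A) (i : ℤ) (m : ℕ) :
    seg u i m = (range m).map fun t : ℕ => u (i + t) := by
  simp [seg, ← map_eq_flatMap]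

lemma seg_length (u : ℤ → A) (i : ℤ) (m : ℕ) : (seg u i m).length = m := by
  simp [seg_eq_map]

lemma seg_add (u : ℤ → A) (i : ℤ) (a b : ℕ) :
    seg u i (a + b) = seg u i a ++ seg u (i + a) b := by
  simp only [seg_eq_map, range_add, map_append, List.map_map]
  congr 2
  funext t
  simp only [Function.comp_apply, Nat.cast_add, add_assoc]

lemma exists_seg_eq_of_infix {u : ℤ → A} {i : ℤ} {m : ℕ} {w : List A}
    (h : w <:+: seg u i m) : ∃ j, seg u j w.length = w := by
  obtain ⟨p, q, hpq⟩ := h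
  have hm : m = p.length + w.length + q.length := by
    simpa [seg_length, add_assoc] using (congrArg length hpq).symm
  rw [hm, seg_add, seg_add] at hpq
  refine ⟨i + p.length, ?_⟩
  have hpw := (append_inj hpq (by simp [seg_length])).1
  exact ((append_inj hpw (by simp [seg_length])).2).symm

lemma apply_eq_of_seg_eq {u v : ℤ → A} {i j : ℤ} {m : ℕ} (h : seg u j m = seg v i m)
    {t : ℕ} (ht : t < m) : u (j + t) = v (i + t) := by
  rw [seg_eq_map, seg_eq_map, map_inj_left] at h
  exact h t (mem_range.2 ht)

lemma mem_closure_shiftOrbit_of_forall_seg [TopologicalSpace A] [DiscreteTopology A]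
    {u v : ℤ → A} (h : ∀ i m, ∃ j, seg u j m = seg v i m) :
    v ∈ closure (shiftOrbit u) := by
  choose j hj using fun N : ℕ => h (-N) (2 * N + 1)
  refine mem_closure_of_tendsto (f := fun N k => u (k + (j N + N))) (b := atTop) ?_
    (Eventually.of_forall fun N => ⟨j N + N, rfl⟩)
  rw [tendsto_pi_nhds]
  intro k
  rw [nhds_discrete, tendsto_pure]
  filter_upwards [eventually_ge_atTop k.natAbs] with N hN
  have hkN : (((k + N).toNat : ℕ) : ℤ) = k + N := Int.toNat_of_nonneg (by omega)
  have := apply_eq_of_seg_eq (hj N) (t := (k + N).toNat) (by omega)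
  rw [hkN] at this
  convert this using 2 <;> ring

end Seg

section ListWindow

variable {α : Type*}

lemma infix_of_append_eq_of_length_le {p s q a b : List α} (h : p ++ s ++ q = a ++ b)
    (hp : a.length ≤ p.length) : s <:+: b := by
  obtain ⟨t, rfl⟩ : a <+: p :=
    prefix_of_prefix_length_le ⟨b, rfl⟩ ⟨s ++ q, by rw [← h, append_assoc]⟩ hp
  exact ⟨t, q, append_cancel_left (by simpa only [append_assoc] using h)⟩

/-- A window `s` of `a ++ b ++ c` that starts inside `a` and reaches past `b` contains `b`. -/
lemma infix_of_append_eq_of_length_le_of_le {p s q a b c : List α}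
    (h : p ++ s ++ q = a ++ b ++ c) (hp : p.length ≤ a.length)
    (hs : a.length + b.length ≤ p.length + s.length) : b <:+: s := by
  obtain ⟨a', rfl⟩ : p <+: a :=
    prefix_of_prefix_length_le ⟨s ++ q, by rw [← append_assoc, h]⟩
      ⟨b ++ c, by rw [← append_assoc]⟩ hp
  have hsq : s ++ q = a' ++ b ++ c := append_cancel_left (by simpa only [append_assoc] using h)
  obtain ⟨t, ht⟩ : a' ++ b <+: s :=
    prefix_of_prefix_length_le ⟨c, hsq.symm⟩ ⟨q, rfl⟩ (by
      simp only [length_append] at hs ⊢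
      omega)
  exact ⟨a', t, ht⟩

lemma exists_forall_length_le_of_finite {S : Set (List α)} (hS : S.Finite) :
    ∃ B, ∀ x ∈ S, x.length ≤ B := by
  obtain ⟨B, hB⟩ := (hS.image length).bddAbove
  exact ⟨B, fun x hx => hB (Set.mem_image_of_mem _ hx)⟩

end ListWindow

inductive IsConcatWith {α : Type*} (W C : Set (List α)) : List α → Prop
  | single {x : List α} : x ∈ W → IsConcatWith W C x
  | cons {x e y : List α} :
      x ∈ W → e ∈ C → IsConcatWith W C y → IsConcatWith W C (x ++ e ++ y)

namespace IsConcatWith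

variable {α : Type*} {W C : Set (List α)}

lemma mono {W' : Set (List α)} (hW : W ⊆ W') {w : List α} (h : IsConcatWith W C w) :
    IsConcatWith W' C w := by
  induction h with
  | single hx => exact single (hW hx)
  | cons hx he _ ih => exact cons (hW hx) he ih

lemma append {a e b : List α} (ha : IsConcatWith W C a) (he : e ∈ C)
    (hb : IsConcatWith W C b) : IsConcatWith W C (a ++ e ++ b) := by
  induction ha with
  | single hx => exact cons hx he hb
  | cons hx he' _ ih => simpa only [append_assoc] using cons hx he' ih

lemma join {w : List α} (h : IsConcatWith {x | IsConcatWith W C x} C w) :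
    IsConcatWith W C w := by
  induction h with
  | single hx => exact hx
  | cons hx he _ ih => exact append hx he ih

lemma exists_prefix {w : List α} (h : IsConcatWith W C w) : ∃ x ∈ W, x <+: w := by
  cases h with
  | single hx => exact ⟨_, hx, prefix_rfl⟩
  | cons hx _ _ => exact ⟨_, hx, by simpa only [append_assoc] using prefix_append _ _⟩

/-- If `s` starts inside the first block and connector, its length makes it cover the
second block. -/
lemma exists_infix_of_length_lt {B E : ℕ} (hW : ∀ x ∈ W, x.length ≤ B)
    (hC : ∀ e ∈ C, e.length ≤ E) {w s : List α} (hw : IsConcatWith W C w) (hs : s <:+: w)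
    (hlen : 2 * B + E < s.length) : ∃ x ∈ W, x <:+: s := by
  induction hw with
  | single hx =>
    have := hs.length_le
    have := hW _ hx
    omega
  | @cons x e y hx he hy ih =>
    obtain ⟨p, q, hpq⟩ := hs
    by_cases hp : (x ++ e).length ≤ p.length
    · exact ih (infix_of_append_eq_of_length_le hpq hp)
    · obtain ⟨x', hx', r, rfl⟩ := hy.exists_prefix
      refine ⟨x', hx', infix_of_append_eq_of_length_le_of_le (a := x ++ e) (c := r)
        (by simpa only [append_assoc] using hpq) (by omega) ?_⟩
      have := hW _ hx
      have := hW _ hx'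
      have := hC _ he
      simp only [length_append] at hp ⊢
      omega

end IsConcatWith

lemma isConcatWith_flatten {α : Type*} {W C : Set (List α)} :
    ∀ {L : List (List α)}, Odd L.length →
      (∀ (i : ℕ) (hi : i < L.length), if Even i then L[i] ∈ W else L[i] ∈ C) →
      IsConcatWith W C L.flatten
  | [], hodd, _ => absurd hodd (by simp)
  | [x], _, hL => by
    have hx := hL 0 (by simp)
    simp only [Even.zero, if_true, getElem_cons_zero] at hx
    simpa only [flatten_cons, flatten_nil, append_nil] using IsConcatWith.single hx
  | x :: e :: L, hodd, hL => by
    have hx := hL 0 (by simp)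
    have he := hL 1 (by simp)
    have hrest : IsConcatWith W C L.flatten := by
      refine isConcatWith_flatten (by simpa [parity_simps] using hodd) fun i hi => ?_
      have := hL (i + 2) (by simp only [length_cons]; omega)
      simpa [parity_simps] using this
    simp only [Even.zero, if_true, getElem_cons_zero] at hx
    simp only [Nat.not_even_one, if_false, getElem_cons_succ, getElem_cons_zero] at he
    simpa only [flatten_cons, append_assoc] using IsConcatWith.cons hx he hrest

section Hierarchy

variable {α : Type*} {C : Set (List α)} {X : ℕ → Set (List α)}

lemma isConcatWith_of_le (hstep : ∀ n, ∀ w ∈ X (n + 1), IsConcatWith (X n) C w) {m M : ℕ}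
    (hmM : m ≤ M) {w : List α} (hw : w ∈ X M) : IsConcatWith (X m) C w := by
  induction M, hmM using Nat.le_induction generalizing w with
  | base => exact .single hw
  | succ M _ ih => exact ((hstep M w hw).mono fun _ => ih).join

lemma exists_forall_infix_mem_of_length_lt (hC : C.Finite) (hXfin : ∀ n, (X n).Finite)
    (hstep : ∀ n, ∀ w ∈ X (n + 1), IsConcatWith (X n) C w) (m : ℕ) :
    ∃ L, ∀ n, ∀ y ∈ X n, ∀ s, s <:+: y → L < s.length → ∃ z ∈ X m, z <:+: s := by
  obtain ⟨B, hB⟩ := exists_forall_length_le_of_finite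
    ((Set.finite_Iic m).biUnion fun n _ => hXfin n)
  obtain ⟨E, hE⟩ := exists_forall_length_le_of_finite hC
  refine ⟨2 * B + E, fun n y hy s hs hlen => ?_⟩
  rcases le_total m n with hmn | hnm
  · exact (isConcatWith_of_le hstep hmn hy).exists_infix_of_length_lt
      (fun x hx => hB x (Set.mem_biUnion (Set.mem_Iic.2 le_rfl) hx)) hE hs hlen
  · have := hs.length_le
    have := hB y (Set.mem_biUnion hnm hy)
    omega

end Hierarchy

theorem subshift_of_substitution_minimal_general {A : Type*}
    [TopologicalSpace A] [DiscreteTopology A]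
    (C : Set (List A)) (hC : C.Finite)
    (X : ℕ → Set (List A)) (hX : ∀ n, (X n).Finite)
    (hconc : ∀ n, ∀ w ∈ X (n + 1), ∃ L : List (List A),
      w = L.flatten ∧ Odd L.length ∧
      ∀ (i : ℕ) (h : i < L.length), if Even i then L.get ⟨i, h⟩ ∈ X n else L.get ⟨i, h⟩ ∈ C)
    (hcontain : ∀ n, ∃ m, ∀ z ∈ X m, ∀ x ∈ X n, x.IsInfix z) :
    ∀ u ∈ genSubshift (⋃ n, X n),
      genSubshift (⋃ n, X n) ⊆ closure (shiftOrbit u) := by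
  have hstep : ∀ n, ∀ w ∈ X (n + 1), IsConcatWith (X n) C w := fun n w hw => by
    obtain ⟨L, rfl, hodd, halt⟩ := hconc n w hw
    exact isConcatWith_flatten hodd (by simpa using halt)
  intro u hu v hv
  refine mem_closure_shiftOrbit_of_forall_seg fun i m => ?_
  obtain ⟨x, hxX, hvx⟩ := hv i m
  obtain ⟨n, hx⟩ := Set.mem_iUnion.1 hxX
  obtain ⟨m₀, hm₀⟩ := hcontain n
  obtain ⟨L, hL⟩ := exists_forall_infix_mem_of_length_lt hC hX hstep m₀
  obtain ⟨y, hyX, huy⟩ := hu 0 (L + 1)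
  obtain ⟨M, hy⟩ := Set.mem_iUnion.1 hyX
  obtain ⟨z, hz, hzu⟩ := hL M y hy _ huy (by rw [seg_length]; omega)
  obtain ⟨j, hj⟩ := exists_seg_eq_of_infix (hvx.trans ((hm₀ z hz x hx).trans hzu))
  exact ⟨j, by rwa [seg_length] at hj⟩

/-- if each word of `X (n+1)` is a concatenation
`x₁ e₁ x₂ e₂ ⋯ e_{m-1} x_m` with `xᵢ ∈ X n`, `eᵢ ∈ C` (`C` a finite set of
connectors), and for every `n` there is `m` such that every word of `X m`
contains every word of `X n` as a subword, then the subshift generated by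
`⋃ₙ X n` is minimal. -/
theorem subshift_of_substitution_minimal {A : Type*} [Fintype A]
    [TopologicalSpace A] [DiscreteTopology A]
    (C : Set (List A)) (hC : C.Finite)
    (X : ℕ → Set (List A)) (hX : ∀ n, (X n).Finite)
    (hconc : ∀ n, ∀ w ∈ X (n + 1), ∃ L : List (List A),
      w = L.flatten ∧ Odd L.length ∧
      ∀ (i : ℕ) (h : i < L.length), if Even i then L.get ⟨i, h⟩ ∈ X n else L.get ⟨i, h⟩ ∈ C)
    (hcontain : ∀ n, ∃ m, ∀ z ∈ X m, ∀ x ∈ X n, x.IsInfix z) :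
    ∀ u ∈ genSubshift (⋃ n, X n),
      genSubshift (⋃ n, X n) ⊆ closure (shiftOrbit u) :=
  subshift_of_substitution_minimal_general C hC X hX hconc hcontain
end

section
/- Let A be the direct limit of the groups Gₙ = Alt(Xₙ) × Alt(Yₙ) (products of alternating groups on finite sets Xₙ, Yₙ with |Xₙ|, |Yₙ| → ∞, |Xₙ|, |Yₙ| ≥ 5) along injective homomorphisms φₙ : Gₙ → Gₙ₊₁ with the property that for every nontrivial g ∈ Gₙ, both coordinates of φₙ(φₙ₊₁(g)) ∈ Alt(Xₙ₊₂) × Alt(Yₙ₊₂) are nontrivial. Then A is a simple group. -/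
open Filter

/-!
A nontrivial normal subgroup `N` of `A` contains some `g ≠ 1`, which lies in some `K n`. For
every `m ≥ n + 2` both coordinates of `g` in `K m ≅ Alt(X m) × Alt(Y m)` are nontrivial.
Commutators of `g` with elements of one factor then give nontrivial elements of `N` inside that
factor; as alternating groups on at least five points are simple with trivial centre, `N`
contains both factors, hence all of `K m`. The `K m` exhaust `A`, so `N = A`.
-/

namespace Subgroup

variable {G H : Type*} [Group G] [Group H]

theorem Normal.comap_inl_eq_top [IsSimpleGroup G] (hG : center G = ⊥) {N : Subgroup (G × H)}
    (hN : N.Normal) {x : G × H} (hx : x ∈ N) (hx1 : x.1 ≠ 1) :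
    N.comap (MonoidHom.inl G H) = ⊤ := by
  obtain ⟨t, ht⟩ : ∃ t : G, t * x.1 ≠ x.1 * t := by
    by_contra! h
    exact hx1 (by rw [← mem_bot, ← hG]; exact mem_center_iff.2 h)
  have hcomm : t * x.1 * t⁻¹ * x.1⁻¹ ∈ N.comap (MonoidHom.inl G H) := by
    have := N.mul_mem (hN.conj_mem x hx (t, 1)) (N.inv_mem hx)
    rw [mem_comap]
    convert this using 1
    ext <;> simp
  refine (hN.comap _).eq_bot_or_eq_top.resolve_left fun hbot => ht ?_
  rwa [hbot, mem_bot, mul_inv_eq_one, mul_inv_eq_iff_eq_mul] at hcomm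

theorem Normal.comap_inr_eq_top [IsSimpleGroup H] (hH : center H = ⊥) {N : Subgroup (G × H)}
    (hN : N.Normal) {x : G × H} (hx : x ∈ N) (hx2 : x.2 ≠ 1) :
    N.comap (MonoidHom.inr G H) = ⊤ := by
  have := (hN.comap (MulEquiv.prodComm : H × G ≃* G × H).toMonoidHom).comap_inl_eq_top hH
    (x := x.swap) hx hx2
  rwa [comap_comap] at this

theorem Normal.eq_top_of_fst_ne_one_of_snd_ne_one [IsSimpleGroup G] [IsSimpleGroup H]
    (hG : center G = ⊥) (hH : center H = ⊥) {N : Subgroup (G × H)} (hN : N.Normal)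
    {x : G × H} (hx : x ∈ N) (hx1 : x.1 ≠ 1) (hx2 : x.2 ≠ 1) : N = ⊤ := by
  rw [eq_top_iff, ← top_prod_top, prod_le_iff, map_le_iff_le_comap, map_le_iff_le_comap,
    hN.comap_inl_eq_top hG hx hx1, hN.comap_inr_eq_top hH hx hx2]
  exact ⟨le_rfl, le_rfl⟩

theorem le_normalClosure_of_mulEquiv_prod [IsSimpleGroup G] [IsSimpleGroup H]
    (hG : center G = ⊥) (hH : center H = ⊥) {A : Type*} [Group A] {K : Subgroup A}
    (e : K ≃* G × H) {g : A} (hg : g ∈ K) (h1 : (e ⟨g, hg⟩).1 ≠ 1) (h2 : (e ⟨g, hg⟩).2 ≠ 1) :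
    K ≤ normalClosure {g} := by
  set N := ((normalClosure {g}).subgroupOf K).comap e.symm.toMonoidHom
  have hN : N.Normal := (normalClosure_normal.subgroupOf K).comap _
  have hgN : e ⟨g, hg⟩ ∈ N := by
    rw [mem_comap, MulEquiv.coe_toMonoidHom, MulEquiv.symm_apply_apply, mem_subgroupOf]
    exact subset_normalClosure rfl
  have htop := hN.eq_top_of_fst_ne_one_of_snd_ne_one hG hH hgN h1 h2
  intro a ha
  have := htop.ge (mem_top (e ⟨a, ha⟩))
  rwa [mem_comap, MulEquiv.coe_toMonoidHom, MulEquiv.symm_apply_apply, mem_subgroupOf] at this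

end Subgroup

open Subgroup in
theorem isSimpleGroup_of_iSup_eq_top {A ι : Type*} [Group A] [Nontrivial A] [Preorder ι]
    [Nonempty ι] [IsDirectedOrder ι] {K : ι → Subgroup A} (hK : Monotone K)
    (hsup : ⨆ i, K i = ⊤) (h : ∀ g : A, g ≠ 1 → ∀ᶠ i in atTop, K i ≤ normalClosure {g}) :
    IsSimpleGroup A where
  exists_pair_ne := exists_pair_ne A
  eq_bot_or_eq_top_of_normal N hN := by
    refine N.bot_or_exists_ne_one.imp id fun ⟨g, hgN, hg1⟩ => ?_
    rw [eq_top_iff, ← hsup, iSup_le_iff]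
    intro i
    obtain ⟨j, hij, hj⟩ := ((eventually_ge_atTop i).and (h g hg1)).exists
    exact (hK hij).trans (hj.trans (normalClosure_le_normal (Set.singleton_subset_iff.2 hgN)))

open Subgroup in
/-- let `A` be the direct limit (increasing union) of groups
`Gₙ ≅ Alt(Xₙ) × Alt(Yₙ)` with `|Xₙ|, |Yₙ| ≥ 5` tending to infinity, such that
for every nontrivial `g ∈ Gₙ` both coordinates of its image in `Gₙ₊₂` are
nontrivial. Then `A` is simple. -/
theorem direct_limit_of_alternating_products_simple
    {A : Type*} [Group A]
    (X Y : ℕ → Type*) [∀ n, Fintype (X n)] [∀ n, DecidableEq (X n)]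
    [∀ n, Fintype (Y n)] [∀ n, DecidableEq (Y n)]
    (hX5 : ∀ n, 5 ≤ Fintype.card (X n)) (hY5 : ∀ n, 5 ≤ Fintype.card (Y n))
    (K : ℕ → Subgroup A) (hmono : Monotone K) (hsup : (⨆ n, K n) = ⊤)
    (e : ∀ n, K n ≃* (alternatingGroup (X n) × alternatingGroup (Y n)))
    (hkey : ∀ (n : ℕ) (g : A) (hg : g ∈ K n), g ≠ 1 →
      ((e (n + 2) ⟨g, hmono (by omega) hg⟩).1 ≠ 1 ∧
       (e (n + 2) ⟨g, hmono (by omega) hg⟩).2 ≠ 1)) :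
    IsSimpleGroup A := by
  have hX n : 5 ≤ Nat.card (X n) := by simpa using hX5 n
  have hY n : 5 ≤ Nat.card (Y n) := by simpa using hY5 n
  have (n : ℕ) : IsSimpleGroup (alternatingGroup (X n)) := alternatingGroup.isSimpleGroup (hX n)
  have (n : ℕ) : IsSimpleGroup (alternatingGroup (Y n)) := alternatingGroup.isSimpleGroup (hY n)
  have : Nontrivial (K 0) := (e 0).symm.injective.nontrivial
  have : Nontrivial A := (K 0).subtype_injective.nontrivial
  refine isSimpleGroup_of_iSup_eq_top hmono hsup fun g hg => ?_
  obtain ⟨n, hgn⟩ := (mem_iSup_of_directed hmono.directed_le).1 (hsup ▸ mem_top g)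
  refine eventually_atTop.2 ⟨n + 2, fun m hm => ?_⟩
  obtain ⟨k, hk, rfl⟩ : ∃ k, n ≤ k ∧ m = k + 2 := ⟨m - 2, by omega, by omega⟩
  obtain ⟨h1, h2⟩ := hkey k g (hmono hk hgn) hg
  exact le_normalClosure_of_mulEquiv_prod (alternatingGroup.center_eq_bot (by grind))
    (alternatingGroup.center_eq_bot (by grind)) (e (k + 2)) _ h1 h2
end
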